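/- arXiv:1103.3404 — 4 statements merged into one kernel-verified Lean document; each statement's English description precedes it below -/
import Mathlib

section
/- Let A be a von Neumann algebra on a complex Hilbert space H, and (p_ξ)_{ξ∈Ξ} an orthogonal family of projections belonging to A whose supremum is 1 in B(H). Then A coincides with its infinite order decomposition: if a ∈ B(H) satisfies p_ξ a p_η ∈ A for all ξ, η ∈ Ξ, then a ∈ A. -/
/-!
The partial sums `q F = ∑ ξ ∈ F, p ξ` are projections, hence contractions, and `q F` fixes the
range of `p ξ` as soon as `ξ ∈ F`. A uniformly bounded net of operators that converges pointwise
on a dense subspace converges pointwise everywhere, so `q F → 1` strongly, and then the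
compressions `q F * a * q F = ∑ ξ ∈ F, ∑ η ∈ F, p ξ * a * p η ∈ A` converge strongly, hence in
the weak operator topology, to `a`. Since `A` is WOT-closed, `a ∈ A`.
-/

open Filter Topology

theorem IsStarProjection.sum {R ι : Type*} [NonUnitalSemiring R] [StarRing R]
    {p : ι → R} {s : Finset ι} (hp : ∀ i ∈ s, IsStarProjection (p i))
    (horth : ∀ i ∈ s, ∀ j ∈ s, i ≠ j → p i * p j = 0) :
    IsStarProjection (∑ i ∈ s, p i) := by
  classical
  induction s using Finset.induction_on with
  | empty => simp
  | insert i s hi ih =>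
    rw [Finset.sum_insert hi]
    refine (hp i (s.mem_insert_self i)).add
      (ih (fun j hj ↦ hp j (Finset.mem_insert_of_mem hj))
        (fun j hj k hk ↦ horth j (Finset.mem_insert_of_mem hj) k (Finset.mem_insert_of_mem hk))) ?_
    rw [Finset.mul_sum]
    exact Finset.sum_eq_zero fun j hj ↦
      horth i (s.mem_insert_self i) j (Finset.mem_insert_of_mem hj) (ne_of_mem_of_not_mem hj hi).symm

theorem Finset.sum_mul_eq_of_mem {R ι : Type*} [NonUnitalNonAssocSemiring R]
    {p : ι → R} {s : Finset ι} {j : ι} (hj : j ∈ s) (hpj : IsIdempotentElem (p j))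
    (horth : ∀ i ∈ s, i ≠ j → p i * p j = 0) :
    (∑ i ∈ s, p i) * p j = p j := by
  rw [Finset.sum_mul, Finset.sum_eq_single_of_mem j hj horth, hpj.eq]

section PointwiseConvergence

variable {𝕜 E F ι : Type*} [NontriviallyNormedField 𝕜]
  [NormedAddCommGroup E] [NormedSpace 𝕜 E] [NormedAddCommGroup F] [NormedSpace 𝕜 F]

theorem ContinuousLinearMap.tendsto_apply_of_norm_le_of_dense_iSup {l : Filter ι} {T : ι → E →L[𝕜] F}
    {S : E →L[𝕜] F} {C : ℝ} (hT : ∀ i, ‖T i‖ ≤ C) {Ξ : Type*} {U : Ξ → Submodule 𝕜 E}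
    (hU : (⨆ ξ, U ξ).topologicalClosure = ⊤)
    (hconv : ∀ ξ, ∀ x ∈ U ξ, Tendsto (fun i ↦ T i x) l (𝓝 (S x))) (x : E) :
    Tendsto (fun i ↦ T i x) l (𝓝 (S x)) := by
  let M : Submodule 𝕜 E :=
    { carrier := {x | Tendsto (fun i ↦ T i x) l (𝓝 (S x))}
      add_mem' := fun hx hy ↦ by simpa using hx.add hy
      zero_mem' := by simpa using tendsto_const_nhds
      smul_mem' := fun c x hx ↦ by simpa using hx.const_smul c }
  have hequi : Equicontinuous ((⇑) ∘ T) :=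
    ((NormedSpace.equicontinuous_TFAE T).out 5 1).mp (⟨C, hT⟩ : ∃ C, ∀ i, ‖T i‖ ≤ C)
  have hM : IsClosed (M : Set E) := hequi.isClosed_setOfPred_tendsto S.continuous
  have : (⨆ ξ, U ξ).topologicalClosure ≤ M :=
    Submodule.topologicalClosure_minimal _ (iSup_le hconv) hM
  exact this (hU ▸ Submodule.mem_top)

theorem ContinuousLinearMapWOT.tendsto_ofCLM_of_tendsto_apply {l : Filter ι}
    {T : ι → E →L[𝕜] F} {S : E →L[𝕜] F} (h : ∀ x, Tendsto (fun i ↦ T i x) l (𝓝 (S x))) :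
    Tendsto (fun i ↦ ContinuousLinearMapWOT.ofCLM (T i)) l (𝓝 (ContinuousLinearMapWOT.ofCLM S)) :=
  ContinuousLinearMapWOT.tendsto_iff_forall_dual_apply_tendsto.mpr fun x y ↦
    (y.continuous.tendsto _).comp (h x)

end PointwiseConvergence

theorem stmt_7_general {H : Type*} [NormedAddCommGroup H] [InnerProductSpace ℂ H] [CompleteSpace H]
    {Ξ : Type*} (A : StarSubalgebra ℂ (H →L[ℂ] H))
    (hA : IsClosed ((ContinuousLinearMapWOT.ofCLM : (H →L[ℂ] H) → (H →WOT[ℂ] H)) '' (A : Set (H →L[ℂ] H))))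
    (p : Ξ → H →L[ℂ] H)
    (hproj : ∀ ξ, IsSelfAdjoint (p ξ) ∧ p ξ * p ξ = p ξ)
    (horth : ∀ ξ η, ξ ≠ η → p ξ * p η = 0)
    (hsup : (⨆ ξ, LinearMap.range (p ξ : H →ₗ[ℂ] H)).topologicalClosure = ⊤)
    (a : H →L[ℂ] H) (ha : ∀ ξ η, p ξ * a * p η ∈ A) :
    a ∈ A := by
  let q : Finset Ξ → H →L[ℂ] H := fun F ↦ ∑ ξ ∈ F, p ξ
  have hq_norm (F : Finset Ξ) : ‖q F‖ ≤ 1 :=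
    IsStarProjection.norm_le _ <| IsStarProjection.sum (fun ξ _ ↦ ⟨(hproj ξ).2, (hproj ξ).1⟩)
      fun ξ _ η _ ↦ horth ξ η
  have hq_fix (ξ : Ξ) (y : H) : (fun F ↦ q F (p ξ y)) =ᶠ[atTop] fun _ ↦ p ξ y := by
    filter_upwards [eventually_ge_atTop {ξ}] with F hF
    change (q F * p ξ) y = p ξ y
    rw [Finset.sum_mul_eq_of_mem (Finset.singleton_subset_iff.mp hF) (hproj ξ).2
      fun η _ ↦ horth η ξ]
  have hq_tendsto (x : H) : Tendsto (fun F ↦ q F x) atTop (𝓝 x) := by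
    refine ContinuousLinearMap.tendsto_apply_of_norm_le_of_dense_iSup (S := 1) hq_norm hsup ?_ x
    rintro ξ _ ⟨y, rfl⟩
    exact tendsto_const_nhds.congr' (hq_fix ξ y).symm
  have hcompress_tendsto (x : H) : Tendsto (fun F ↦ (q F * a * q F) x) atTop (𝓝 (a x)) := by
    refine ContinuousLinearMap.tendsto_apply_of_norm_le_of_dense_iSup (C := ‖a‖) (fun F ↦ ?_) hsup ?_ x
    · calc ‖q F * a * q F‖ ≤ ‖q F‖ * ‖a‖ * ‖q F‖ := norm_mul₃_le
        _ ≤ 1 * ‖a‖ * 1 := by gcongr <;> exact hq_norm F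
        _ = ‖a‖ := by ring
    · rintro ξ _ ⟨y, rfl⟩
      refine (hq_tendsto (a (p ξ y))).congr' ?_
      filter_upwards [hq_fix ξ y] with F hF
      simp [hF]
  have hcompress_mem (F : Finset Ξ) : q F * a * q F ∈ A := by
    simp only [q, Finset.sum_mul, Finset.mul_sum]
    exact sum_mem fun η _ ↦ sum_mem fun ξ _ ↦ ha ξ η
  obtain ⟨b, hb, hba⟩ := hA.mem_of_tendsto
    (ContinuousLinearMapWOT.tendsto_ofCLM_of_tendsto_apply hcompress_tendsto)
    (Eventually.of_forall fun F ↦ ⟨_, hcompress_mem F, rfl⟩)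
  rwa [← ContinuousLinearMapWOT.ofCLM_injective hba]

/-- Let `A` be a von Neumann algebra on a complex Hilbert space `H`
(a unital *-subalgebra of `B(H)` closed in the weak operator topology) and `(p ξ)` an
orthogonal family of projections in `A` with supremum `1` in `B(H)`. Then `A` coincides with
its infinite order decomposition: any `a ∈ B(H)` with `p ξ * a * p η ∈ A` for all `ξ, η`
belongs to `A`. -/
theorem stmt_7 {H : Type*} [NormedAddCommGroup H] [InnerProductSpace ℂ H] [CompleteSpace H]
    {Ξ : Type*} (A : StarSubalgebra ℂ (H →L[ℂ] H))
    (hA : IsClosed ((ContinuousLinearMapWOT.ofCLM : (H →L[ℂ] H) → (H →WOT[ℂ] H)) '' (A : Set (H →L[ℂ] H))))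
    (p : Ξ → H →L[ℂ] H) (hpA : ∀ ξ, p ξ ∈ A)
    (hproj : ∀ ξ, IsSelfAdjoint (p ξ) ∧ p ξ * p ξ = p ξ)
    (horth : ∀ ξ η, ξ ≠ η → p ξ * p η = 0)
    (hsup : (⨆ ξ, LinearMap.range (p ξ : H →ₗ[ℂ] H)).topologicalClosure = ⊤)
    (a : H →L[ℂ] H) (ha : ∀ ξ η, p ξ * a * p η ∈ A) :
    a ∈ A :=
  stmt_7_general A hA p hproj horth hsup a ha
end

section
/- Let A be a C*-subalgebra of B(H) containing the identity operator, and (p_ξ)_{ξ∈Ξ} an orthogonal family of projections belonging to A whose supremum is 1 in B(H). Suppose the projections p_ξ are pairwise equivalent in A and for every ξ the corner p_ξ A p_ξ is closed in the weak operator topology of B(H). Then for all ξ, η ∈ Ξ the corner p_ξ A p_η = {p_ξ a p_η : a ∈ A} is closed in the weak operator topology of B(H). -/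
/-!
Choose `v ∈ A` with `v * star v = p ξ` and `star v * v = p η`. An operator `x` lies in
`p ξ * A * p η` exactly when `x * star v ∈ p ξ * A * p ξ` and `x * p η = x`: conversely
`x = x * star v * v = p ξ * c * p ξ * v = p ξ * (c * v) * p η`. Both conditions are closed in the
weak operator topology, since right multiplication by a fixed operator is WOT-continuous.
-/

section Corner

variable {R : Type*} [Semigroup R] [StarMul R] {S : Type*} [SetLike S R] [MulMemClass S R]
  [StarMemClass S R]

lemma corner_eq_preimage_mul_star_inter {A : S} {p q v : R} (hv : v ∈ A)
    (hp : v * star v = p) (hq : star v * v = q) (hqq : q * q = q) :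
    {x | ∃ a ∈ A, x = p * a * q} =
      (· * star v) ⁻¹' {x | ∃ a ∈ A, x = p * a * p} ∩ {x | x * q = x} := by
  have hpv : p * v = v * q := by rw [← hp, ← hq, mul_assoc]
  have hqv : q * star v = star v * p := by rw [← hp, ← hq, mul_assoc]
  ext x
  constructor
  · rintro ⟨a, ha, rfl⟩
    refine ⟨⟨a * star v, mul_mem ha (star_mem hv), ?_⟩, ?_⟩
    · simp only [mul_assoc, hqv]
    · change p * a * q * q = p * a * q
      rw [mul_assoc _ q q, hqq]
  · rintro ⟨⟨c, hc, hxc⟩, hxq⟩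
    refine ⟨c * v, mul_mem hc hv, ?_⟩
    calc x = x * star v * v := by rw [mul_assoc, hq, hxq]
      _ = p * c * p * v := congrArg (· * v) hxc
      _ = p * (c * v) * q := by simp only [mul_assoc, hpv]

end Corner

namespace ContinuousLinearMapWOT

variable {𝕜 E F : Type*} [NormedField 𝕜] [AddCommGroup E] [TopologicalSpace E] [Module 𝕜 E]
  [AddCommGroup F] [TopologicalSpace F] [Module 𝕜 F]

lemma image_ofCLM (s : Set (E →L[𝕜] F)) : ofCLM '' s = toCLM ⁻¹' s :=
  Set.ext fun _ => ⟨by rintro ⟨x, hx, rfl⟩; exact hx, fun hx => ⟨_, hx, rfl⟩⟩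

variable [IsTopologicalAddGroup F]

lemma preimage_toCLM_setOf_mul_eq_self (q : F →L[𝕜] F) :
    toCLM ⁻¹' {x | x * q = x} = {w : F →WOT[𝕜] F | w * ofCLM q = w} :=
  Set.ext fun _ => toCLM_injective.eq_iff

lemma continuous_mul_right [ContinuousConstSMul 𝕜 F]
    (v : F →WOT[𝕜] F) : Continuous fun w : F →WOT[𝕜] F => w * v :=
  continuous_precomp v

end ContinuousLinearMapWOT

theorem stmt_8_general {H : Type*} [NormedAddCommGroup H] [InnerProductSpace ℂ H] [CompleteSpace H]
    {Ξ : Type*} (A : StarSubalgebra ℂ (H →L[ℂ] H))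
    (p : Ξ → H →L[ℂ] H)
    (hproj : ∀ ξ, IsSelfAdjoint (p ξ) ∧ p ξ * p ξ = p ξ)
    (hequiv : ∀ ξ η, ∃ v ∈ A, v * star v = p ξ ∧ star v * v = p η)
    (hcorner : ∀ ξ, IsClosed ((ContinuousLinearMapWOT.ofCLM : (H →L[ℂ] H) → H →WOT[ℂ] H) ''
      {x : H →L[ℂ] H | ∃ a ∈ A, x = p ξ * a * p ξ})) :
    ∀ ξ η, IsClosed ((ContinuousLinearMapWOT.ofCLM : (H →L[ℂ] H) → H →WOT[ℂ] H) ''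
      {x : H →L[ℂ] H | ∃ a ∈ A, x = p ξ * a * p η}) := by
  intro ξ η
  obtain ⟨v, hvA, hvv, hvv'⟩ := hequiv ξ η
  have hdiag := hcorner ξ
  have hfix : IsClosed (ContinuousLinearMapWOT.toCLM ⁻¹' {x : H →L[ℂ] H | x * p η = x}) := by
    rw [ContinuousLinearMapWOT.preimage_toCLM_setOf_mul_eq_self]
    exact isClosed_eq (ContinuousLinearMapWOT.continuous_mul_right _) continuous_id
  rw [ContinuousLinearMapWOT.image_ofCLM] at hdiag
  rw [corner_eq_preimage_mul_star_inter hvA hvv hvv' (hproj η).2,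
    ContinuousLinearMapWOT.image_ofCLM, Set.preimage_inter]
  exact (hdiag.preimage (ContinuousLinearMapWOT.continuous_mul_right (.ofCLM (star v)))).inter hfix

/-- Let `A` be a (norm-closed) C*-subalgebra of `B(H)` containing the identity
and `(p ξ)` an orthogonal family of projections in `A` with supremum `1` in `B(H)`. If the
projections are pairwise (Murray–von Neumann) equivalent in `A` and every diagonal corner
`p ξ * A * p ξ` is closed in the weak operator topology, then every corner
`p ξ * A * p η = {p ξ * a * p η : a ∈ A}` is closed in the weak operator topology. -/
theorem stmt_8 {H : Type*} [NormedAddCommGroup H] [InnerProductSpace ℂ H] [CompleteSpace H]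
    {Ξ : Type*} (A : StarSubalgebra ℂ (H →L[ℂ] H)) (hA : IsClosed (A : Set (H →L[ℂ] H)))
    (p : Ξ → H →L[ℂ] H) (hpA : ∀ ξ, p ξ ∈ A)
    (hproj : ∀ ξ, IsSelfAdjoint (p ξ) ∧ p ξ * p ξ = p ξ)
    (horth : ∀ ξ η, ξ ≠ η → p ξ * p η = 0)
    (hsup : (⨆ ξ, LinearMap.range (p ξ : H →ₗ[ℂ] H)).topologicalClosure = ⊤)
    (hequiv : ∀ ξ η, ∃ v ∈ A, v * star v = p ξ ∧ star v * v = p η)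
    (hcorner : ∀ ξ, IsClosed ((ContinuousLinearMapWOT.ofCLM : (H →L[ℂ] H) → H →WOT[ℂ] H) ''
      {x : H →L[ℂ] H | ∃ a ∈ A, x = p ξ * a * p ξ})) :
    ∀ ξ η, IsClosed ((ContinuousLinearMapWOT.ofCLM : (H →L[ℂ] H) → H →WOT[ℂ] H) ''
      {x : H →L[ℂ] H | ∃ a ∈ A, x = p ξ * a * p η}) :=
  stmt_8_general A p hproj hequiv hcorner
end

section
/- Let A be a C*-subalgebra of B(H) containing the identity operator, and (p_ξ)_{ξ∈Ξ} an orthogonal family of projections belonging to A whose supremum is 1 in B(H). Suppose the projections p_ξ are pairwise equivalent in A and for every ξ the corner p_ξ A p_ξ is closed in the weak operator topology of B(H). Then the infinite order decomposition S = {a ∈ B(H) : p_ξ a p_η ∈ A for all ξ, η ∈ Ξ} is closed under the multiplication of B(H), and hence S is a C*-subalgebra of B(H). -/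
open scoped InnerProductSpace

/-!
For `a, b ∈ S` the entry `p ξ (a b) p η` is the weak-operator sum of the products
`(p ξ a p ζ) (p ζ b p η) ∈ A`, because `∑ ζ, p ζ = 1` strongly. The partial sums lie in `A`, which
need not be weakly closed; but multiplying on the right by `v⋆`, where `v v⋆ = p ξ` and
`v⋆ v = p η`, moves every partial sum into the corner `p ξ A p ξ`, which is weakly closed. Hence
`p ξ (a b) p η v⋆ ∈ p ξ A p ξ`, and multiplying back by `v` gives `p ξ (a b) p η ∈ A`. The other
algebraic closure properties of `S` are formal, and `S` is norm closed as an intersection of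
preimages of `A`.
-/

section PartialIsometry

variable {R : Type*} [NonUnitalNormedRing R] [StarRing R] [CStarRing R]

theorem mul_star_mul_self_of_isIdempotentElem {v : R} (h : IsIdempotentElem (star v * v)) :
    v * (star v * v) = v := by
  refine sub_eq_zero.mp ((CStarRing.star_mul_self_eq_zero_iff _).mp ?_)
  have hq : star v * (v * (star v * v)) = star v * v := by rw [← mul_assoc, h.eq]
  simp only [star_sub, star_mul, star_star, sub_mul, mul_sub, mul_assoc, hq, sub_self]

end PartialIsometry

section StarProjections

variable {𝕜 H ι : Type*} [RCLike 𝕜] [NormedAddCommGroup H] [InnerProductSpace 𝕜 H]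
  [CompleteSpace H]

theorem range_isOrtho_of_mul_eq_zero {p q : H →L[𝕜] H} (hp : IsSelfAdjoint p)
    (hpq : p * q = 0) : LinearMap.range (p : H →ₗ[𝕜] H) ⟂ LinearMap.range (q : H →ₗ[𝕜] H) := by
  rw [Submodule.isOrtho_iff_inner_eq]
  rintro _ ⟨x, rfl⟩ _ ⟨y, rfl⟩
  calc ⟪p x, q y⟫_𝕜 = ⟪x, (p * q) y⟫_𝕜 := hp.isSymmetric x (q y)
    _ = 0 := by rw [hpq, zero_apply, inner_zero_right]

theorem hasSum_apply_of_isStarProjection {p : ι → H →L[𝕜] H}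
    (hp : ∀ i, IsStarProjection (p i)) (horth : Pairwise fun i j => p i * p j = 0)
    (hsup : (⨆ i, LinearMap.range (p i : H →ₗ[𝕜] H)).topologicalClosure = ⊤) (x : H) :
    HasSum (fun i => p i x) x := by
  have := fun i =>
    (ContinuousLinearMap.IsIdempotentElem.isClosed_range (hp i).isIdempotentElem).completeSpace_coe
  have hV := IsHilbertSum.mkInternal _ (orthogonalFamily_iff_pairwise.mpr
    fun i j hij => range_isOrtho_of_mul_eq_zero (hp i).isSelfAdjoint (horth hij)) hsup.ge
  set w := hV.linearIsometryEquiv x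
  have hw : HasSum (fun i => (w i : H)) x := by
    simpa [w] using hV.hasSum_linearIsometryEquiv_symm w
  have hfix (i : ι) : p i (w i) = w i :=
    LinearMap.IsIdempotentElem.mem_range_iff
      (ContinuousLinearMap.IsIdempotentElem.toLinearMap (hp i).isIdempotentElem) |>.mp (w i).2
  have hcomp (i : ι) : p i x = w i := by
    refine ((hw.mapL (p i)).unique (hasSum_single i fun j hji => ?_)).trans (hfix i)
    rw [← hfix j, ← mul_apply_eq_comp, horth hji.symm, zero_apply]
  simpa only [hcomp] using hw

end StarProjections

section WeakOperatorTopology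

open ContinuousLinearMapWOT

variable {𝕜 E ι : Type*} [NormedField 𝕜] [NormedAddCommGroup E] [NormedSpace 𝕜 E]

theorem hasSum_ofCLM_mul_mul {p : ι → E →L[𝕜] E} (hp : ∀ x, HasSum (fun i => p i x) x)
    (c d : E →L[𝕜] E) : HasSum (fun i => ofCLM (c * p i * d)) (ofCLM (c * d)) := by
  refine (isInducing_inducingFn.hasSum_iff _ _).mp (Pi.hasSum.mpr fun ⟨x, y⟩ => ?_)
  simpa using (hp (d x)).mapL (y.comp c)

theorem mem_of_hasSum_ofCLM {s : Set (E →L[𝕜] E)} (hs : IsClosed (ofCLM '' s))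
    {f : ι → E →L[𝕜] E} {a : E →L[𝕜] E} (hf : HasSum (fun i => ofCLM (f i)) (ofCLM a))
    (hfs : ∀ t : Finset ι, ∑ i ∈ t, f i ∈ s) : a ∈ s :=
  ofCLM_injective.mem_set_image.mp <| hs.mem_of_tendsto hf <| .of_forall fun t =>
    ⟨_, hfs t, map_sum (addEquiv (σ := RingHom.id 𝕜) (E := E) (F := E)).symm _ _⟩

end WeakOperatorTopology

section OrderDecomposition

variable {𝕜 R ι : Type*} [CommSemiring 𝕜] [StarRing 𝕜] [Semiring R] [StarRing R] [Algebra 𝕜 R]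
  [StarModule 𝕜 R]

/-- The infinite order decomposition `∑⊕ p ξ A p η`, realized inside the ambient algebra. -/
def orderDecomposition (A : StarSubalgebra 𝕜 R) (p : ι → R) : Set R :=
  {a | ∀ i j, p i * a * p j ∈ A}

variable {A : StarSubalgebra 𝕜 R} {p : ι → R}

theorem add_mem_orderDecomposition {a b : R} (ha : a ∈ orderDecomposition A p)
    (hb : b ∈ orderDecomposition A p) : a + b ∈ orderDecomposition A p := fun i j => by
  rw [mul_add, add_mul]
  exact add_mem (ha i j) (hb i j)

theorem star_mem_orderDecomposition (hp : ∀ i, IsSelfAdjoint (p i)) {a : R}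
    (ha : a ∈ orderDecomposition A p) : star a ∈ orderDecomposition A p := fun i j => by
  have : p i * star a * p j = star (p j * a * p i) := by
    simp only [star_mul, (hp i).star_eq, (hp j).star_eq, mul_assoc]
  rw [this]
  exact star_mem (ha j i)

theorem algebraMap_mem_orderDecomposition (hpA : ∀ i, p i ∈ A)
    (hp : ∀ i, IsIdempotentElem (p i)) (horth : Pairwise fun i j => p i * p j = 0) (c : 𝕜) :
    algebraMap 𝕜 R c ∈ orderDecomposition A p := fun i j => by
  rw [Algebra.algebraMap_eq_smul_one, mul_smul_comm, mul_one, smul_mul_assoc]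
  obtain rfl | hij := eq_or_ne i j
  · rw [(hp i).eq]
    exact SMulMemClass.smul_mem c (hpA i)
  · rw [horth hij, smul_zero]
    exact zero_mem A

theorem isClosed_orderDecomposition [TopologicalSpace R] [ContinuousMul R]
    (hA : IsClosed (A : Set R)) (p : ι → R) : IsClosed (orderDecomposition A p) := by
  simp only [orderDecomposition, Set.ofPred_forall]
  exact isClosed_iInter fun i => isClosed_iInter fun j => hA.preimage (by fun_prop)

def orderDecompositionStarSubalgebra (hpA : ∀ i, p i ∈ A) (hp : ∀ i, IsStarProjection (p i))
    (horth : Pairwise fun i j => p i * p j = 0)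
    (hmul : ∀ a ∈ orderDecomposition A p, ∀ b ∈ orderDecomposition A p,
      a * b ∈ orderDecomposition A p) : StarSubalgebra 𝕜 R where
  carrier := orderDecomposition A p
  mul_mem' {a b} ha hb := hmul a ha b hb
  add_mem' := add_mem_orderDecomposition
  algebraMap_mem' := algebraMap_mem_orderDecomposition hpA (fun i => (hp i).isIdempotentElem) horth
  star_mem' := star_mem_orderDecomposition fun i => (hp i).isSelfAdjoint

end OrderDecomposition

section Multiplicativity

open ContinuousLinearMapWOT

variable {𝕜 H ι : Type*} [RCLike 𝕜] [NormedAddCommGroup H] [InnerProductSpace 𝕜 H]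
  [CompleteSpace H] {A : StarSubalgebra 𝕜 (H →L[𝕜] H)} {p : ι → H →L[𝕜] H}

theorem mul_mem_orderDecomposition (hpA : ∀ i, p i ∈ A) (hp : ∀ i, IsIdempotentElem (p i))
    (hsum : ∀ x, HasSum (fun i => p i x) x)
    (hequiv : ∀ i j, ∃ v ∈ A, v * star v = p i ∧ star v * v = p j)
    (hcorner : ∀ i, IsClosed (ofCLM '' {x : H →L[𝕜] H | ∃ a ∈ A, x = p i * a * p i}))
    {a b : H →L[𝕜] H} (ha : a ∈ orderDecomposition A p) (hb : b ∈ orderDecomposition A p) :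
    a * b ∈ orderDecomposition A p := by
  intro i j
  obtain ⟨v, hvA, hvv, hv⟩ := hequiv i j
  have hv_left : star v * p i = star v := by
    have := mul_star_mul_self_of_isIdempotentElem (v := star v) (by rw [star_star, hvv]; exact hp i)
    rwa [star_star, hvv] at this
  set d := b * p j * star v
  have hcorner_mem : p i * a * d ∈ {x : H →L[𝕜] H | ∃ c ∈ A, x = p i * c * p i} := by
    refine mem_of_hasSum_ofCLM (hcorner i) (hasSum_ofCLM_mul_mul hsum (p i * a) d) fun t =>
      ⟨∑ k ∈ t, p i * a * p k * d, sum_mem fun k _ => ?_, ?_⟩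
    · have : p i * a * p k * d = p i * a * p k * (p k * b * p j) * star v := by
        conv_lhs => rw [← (hp k).eq]
        simp only [d, mul_assoc]
      rw [this]
      exact mul_mem (mul_mem (ha i k) (hb k j)) (star_mem hvA)
    · rw [Finset.mul_sum, Finset.sum_mul]
      refine Finset.sum_congr rfl fun k _ => ?_
      simp only [d, mul_assoc, hv_left]
      rw [← mul_assoc (p i) (p i), (hp i).eq]
  obtain ⟨c, hcA, hc⟩ := hcorner_mem
  have : p i * (a * b) * p j = p i * c * p i * v := by
    rw [← hc]
    simp only [d, mul_assoc, hv, (hp j).eq]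
  rw [this]
  exact mul_mem (mul_mem (mul_mem (hpA i) hcA) (hpA i)) hvA

end Multiplicativity

/-- Let `A` be a (norm-closed) C*-subalgebra of `B(H)` containing the identity
and `(p ξ)` an orthogonal family of projections in `A` with supremum `1` in `B(H)`, whose
members are pairwise equivalent in `A` and such that each corner `p ξ * A * p ξ` is closed in
the weak operator topology. Then the infinite order decomposition
`S = {a : p ξ * a * p η ∈ A for all ξ, η}` is closed under the multiplication of `B(H)`, and
hence `S` is a (norm-closed, star-closed, unital) C*-subalgebra of `B(H)`. -/
theorem stmt_9 {H : Type*} [NormedAddCommGroup H] [InnerProductSpace ℂ H] [CompleteSpace H]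
    {Ξ : Type*} (A : StarSubalgebra ℂ (H →L[ℂ] H)) (hA : IsClosed (A : Set (H →L[ℂ] H)))
    (p : Ξ → H →L[ℂ] H) (hpA : ∀ ξ, p ξ ∈ A)
    (hproj : ∀ ξ, IsSelfAdjoint (p ξ) ∧ p ξ * p ξ = p ξ)
    (horth : ∀ ξ η, ξ ≠ η → p ξ * p η = 0)
    (hsup : (⨆ ξ, LinearMap.range (p ξ : H →ₗ[ℂ] H)).topologicalClosure = ⊤)
    (hequiv : ∀ ξ η, ∃ v ∈ A, v * star v = p ξ ∧ star v * v = p η)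
    (hcorner : ∀ ξ, IsClosed ((ContinuousLinearMapWOT.ofCLM :
        (H →L[ℂ] H) → ContinuousLinearMapWOT (RingHom.id ℂ) H H) ''
      {x : H →L[ℂ] H | ∃ a ∈ A, x = p ξ * a * p ξ}))
    (S : Set (H →L[ℂ] H)) (hS : S = {a : H →L[ℂ] H | ∀ ξ η, p ξ * a * p η ∈ A}) :
    (∀ a ∈ S, ∀ b ∈ S, a * b ∈ S) ∧
    ∃ C : StarSubalgebra ℂ (H →L[ℂ] H), (C : Set (H →L[ℂ] H)) = S ∧
      IsClosed (C : Set (H →L[ℂ] H)) := by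
  have hp (ξ : Ξ) : IsStarProjection (p ξ) := ⟨(hproj ξ).2, (hproj ξ).1⟩
  have hsum := hasSum_apply_of_isStarProjection hp horth hsup
  have hmul : ∀ a ∈ orderDecomposition A p, ∀ b ∈ orderDecomposition A p,
      a * b ∈ orderDecomposition A p := fun a ha b hb =>
    mul_mem_orderDecomposition hpA (fun ξ => (hp ξ).isIdempotentElem) hsum hequiv hcorner ha hb
  subst hS
  refine ⟨hmul, orderDecompositionStarSubalgebra hpA hp horth hmul, rfl, ?_⟩
  exact isClosed_orderDecomposition hA p
end

section
/- Let Ξ be an infinite index set and λ : Ξ × Ξ → ℂ a family of complex numbers. The following are equivalent: (i) there exists K ∈ ℝ such that for every finite subset F ⊆ Ξ, the operator norm of the finite matrix (λ(i,j))_{i,j∈F} (acting on the finite-dimensional Hilbert space ℂ^F) is at most K; (ii) there exists a bounded linear operator T on the Hilbert space ℓ²(Ξ) with ‖T‖ ≤ K whose matrix entries are λ, i.e., ⟨T e_j, e_i⟩ = λ(i,j) for all i, j ∈ Ξ, where (e_i) is the standard orthonormal basis of ℓ²(Ξ). -/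
/-!
(ii) ⇒ (i) is compression: on vectors supported in `F`, the `F`-section of the matrix of `T` is
`x ↦ (T x)|_F`, so its norm is at most `‖T‖`. For (i) ⇒ (ii), testing the section bound on the
conjugate of row `i` gives `S² ≤ K² S` for `S = ∑ⱼ∈s |λ(i, j)|²`, so every row lies in `ℓ²` and
`(T x) i := ∑ⱼ λ(i, j) x j` converges; the section bound passes to the limit over finite
truncations of `x`, and then to the supremum over finite sets of output coordinates.
-/

open scoped InnerProductSpace ComplexConjugate

namespace lp

variable {ι : Type*} {E : ι → Type*} [∀ i, NormedAddCommGroup (E i)]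

theorem sum_norm_sq_le_norm_sq (f : lp E 2) (s : Finset ι) :
    ∑ i ∈ s, ‖f i‖ ^ 2 ≤ ‖f‖ ^ 2 := by
  simpa using sum_rpow_le_norm_rpow (by norm_num) f s

theorem norm_sq_sum_single [DecidableEq ι] (f : ∀ i, E i) (s : Finset ι) :
    ‖∑ i ∈ s, lp.single 2 i (f i)‖ ^ 2 = ∑ i ∈ s, ‖f i‖ ^ 2 := by
  simpa using lp.norm_sum_single (p := 2) (by norm_num) f s

theorem norm_le_of_forall_sum_sq_le {C : ℝ} (hC : 0 ≤ C) {f : lp E 2}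
    (hf : ∀ s : Finset ι, ∑ i ∈ s, ‖f i‖ ^ 2 ≤ C ^ 2) : ‖f‖ ≤ C :=
  norm_le_of_forall_sum_le (by norm_num) hC (by simpa using hf)

theorem _root_.memℓp_two_of_forall_sum_sq_le {f : ∀ i, E i} {C : ℝ}
    (hf : ∀ s : Finset ι, ∑ i ∈ s, ‖f i‖ ^ 2 ≤ C) : Memℓp f 2 :=
  memℓp_gen' (by simpa using hf)

theorem inner_single_one_left {𝕜 : Type*} [RCLike 𝕜] [DecidableEq ι]
    (i : ι) (f : lp (fun _ : ι => 𝕜) 2) : ⟪lp.single 2 i (1 : 𝕜), f⟫_𝕜 = f i := by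
  simp [inner_single_left, RCLike.inner_apply]

section mkCLM

variable {𝕜 V : Type*} [NontriviallyNormedField 𝕜] [∀ i, NormedSpace 𝕜 (E i)]
  [SeminormedAddCommGroup V] [NormedSpace 𝕜 V]

noncomputable def mkCLM (B : ∀ i, V →L[𝕜] E i) (C : ℝ) (hC : 0 ≤ C)
    (hB : ∀ x (s : Finset ι), ∑ i ∈ s, ‖B i x‖ ^ 2 ≤ (C * ‖x‖) ^ 2) : V →L[𝕜] lp E 2 :=
  LinearMap.mkContinuous
    { toFun := fun x => ⟨fun i => B i x, memℓp_two_of_forall_sum_sq_le (hB x)⟩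
      map_add' := fun x y => lp.ext <| funext fun i => map_add (B i) x y
      map_smul' := fun c x => lp.ext <| funext fun i => map_smul (B i) c x }
    C fun x => norm_le_of_forall_sum_sq_le (by positivity) (hB x)

variable (B : ∀ i, V →L[𝕜] E i) (C : ℝ) (hC : 0 ≤ C)
    (hB : ∀ x (s : Finset ι), ∑ i ∈ s, ‖B i x‖ ^ 2 ≤ (C * ‖x‖) ^ 2)

@[simp]
theorem mkCLM_apply (x : V) (i : ι) : mkCLM B C hC hB x i = B i x := rfl

theorem norm_mkCLM_le : ‖mkCLM B C hC hB‖ ≤ C :=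
  LinearMap.mkContinuous_norm_le _ hC _

end mkCLM

end lp

section FiniteSections

variable {𝕜 Ξ : Type*} [RCLike 𝕜] [DecidableEq Ξ]

noncomputable def finiteSection (lam : Ξ × Ξ → 𝕜) (F : Finset Ξ) :
    EuclideanSpace 𝕜 F →L[𝕜] EuclideanSpace 𝕜 F :=
  Matrix.toEuclideanCLM (𝕜 := 𝕜) (n := F) (Matrix.of fun i j : F => lam (i, j))

theorem norm_sq_finiteSection_toLp (lam : Ξ × Ξ → 𝕜) (F : Finset Ξ) (c : Ξ → 𝕜) :
    ‖finiteSection lam F (WithLp.toLp 2 fun j : F => c j)‖ ^ 2 =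
      ∑ i ∈ F, ‖∑ j ∈ F, lam (i, j) * c j‖ ^ 2 := by
  rw [EuclideanSpace.norm_sq_eq, ← Finset.sum_coe_sort F]
  refine Finset.sum_congr rfl fun i _ => ?_
  rw [← Finset.sum_coe_sort F]
  rfl

theorem norm_finiteSection_le_opNorm (T : lp (fun _ : Ξ => 𝕜) 2 →L[𝕜] lp (fun _ : Ξ => 𝕜) 2)
    (F : Finset Ξ) :
    ‖finiteSection (fun p => ⟪lp.single 2 p.1 (1 : 𝕜), T (lp.single 2 p.2 1)⟫_𝕜) F‖ ≤ ‖T‖ := by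
  refine ContinuousLinearMap.opNorm_le_bound _ (norm_nonneg T) fun y => ?_
  set c : Ξ → 𝕜 := Function.extend Subtype.val y 0
  have hc : (fun j : F => c j) = WithLp.ofLp y :=
    funext (Subtype.val_injective.extend_apply _ _)
  set x := ∑ j ∈ F, lp.single 2 j (c j)
  have hTx : ∀ i, T x i = ∑ j ∈ F, ⟪lp.single 2 i (1 : 𝕜), T (lp.single 2 j 1)⟫_𝕜 * c j := by
    intro i
    have hsingle : ∀ j, lp.single (E := fun _ : Ξ => 𝕜) 2 j (c j) = c j • lp.single 2 j 1 :=
      fun j => by rw [← lp.single_smul, smul_eq_mul, mul_one]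
    simp only [lp.inner_single_one_left, x, hsingle, map_sum, map_smul, lp.coeFn_sum,
      lp.coeFn_smul, Finset.sum_apply, Pi.smul_apply, smul_eq_mul, mul_comm]
  have hx : ‖x‖ ^ 2 = ‖y‖ ^ 2 := by
    rw [lp.norm_sq_sum_single, EuclideanSpace.norm_sq_eq, ← hc,
      Finset.sum_coe_sort F fun j => ‖c j‖ ^ 2]
  have key :
      ‖finiteSection (fun p => ⟪lp.single 2 p.1 (1 : 𝕜), T (lp.single 2 p.2 1)⟫_𝕜) F y‖ ^ 2 ≤
        (‖T‖ * ‖y‖) ^ 2 := by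
    calc _ = ∑ i ∈ F, ‖T x i‖ ^ 2 := by
          rw [← WithLp.toLp_ofLp (p := 2) y, ← hc, norm_sq_finiteSection_toLp]
          simp only [hTx]
      _ ≤ ‖T x‖ ^ 2 := lp.sum_norm_sq_le_norm_sq _ _
      _ ≤ (‖T‖ * ‖x‖) ^ 2 := by gcongr; exact T.le_opNorm x
      _ = (‖T‖ * ‖y‖) ^ 2 := by rw [mul_pow, mul_pow, hx]
  exact le_of_sq_le_sq key (by positivity)

section Forward

variable {lam : Ξ × Ξ → 𝕜} {K : ℝ}

theorem sum_norm_sq_sum_mul_le (hK : ∀ F : Finset Ξ, ‖finiteSection lam F‖ ≤ K)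
    (I s : Finset Ξ) (c : Ξ → 𝕜) :
    ∑ i ∈ I, ‖∑ j ∈ s, lam (i, j) * c j‖ ^ 2 ≤ K ^ 2 * ∑ j ∈ s, ‖c j‖ ^ 2 := by
  set F := I ∪ s
  set d : Ξ → 𝕜 := fun j => if j ∈ s then c j else 0
  have hFs : F ∩ s = s := Finset.union_inter_cancel_right
  calc ∑ i ∈ I, ‖∑ j ∈ s, lam (i, j) * c j‖ ^ 2
      ≤ ∑ i ∈ F, ‖∑ j ∈ s, lam (i, j) * c j‖ ^ 2 :=
        Finset.sum_le_sum_of_subset_of_nonneg Finset.subset_union_left fun _ _ _ => by positivity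
    _ = ‖finiteSection lam F (WithLp.toLp 2 fun j : F => d j)‖ ^ 2 := by
        rw [norm_sq_finiteSection_toLp]
        simp only [d, mul_ite, mul_zero, Finset.sum_ite_mem, hFs]
    _ ≤ (K * ‖WithLp.toLp 2 fun j : F => d j‖) ^ 2 := by
        gcongr
        exact (ContinuousLinearMap.le_opNorm _ _).trans (by gcongr; exact hK F)
    _ = K ^ 2 * ∑ j ∈ s, ‖c j‖ ^ 2 := by
        rw [mul_pow, EuclideanSpace.norm_sq_eq, Finset.sum_coe_sort F (fun j => ‖d j‖ ^ 2)]
        simp only [d, apply_ite (‖·‖ ^ 2), norm_zero, zero_pow two_ne_zero, Finset.sum_ite_mem,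
          hFs]

theorem sum_norm_sq_row_le (hK : ∀ F : Finset Ξ, ‖finiteSection lam F‖ ≤ K)
    (i : Ξ) (s : Finset Ξ) : ∑ j ∈ s, ‖lam (i, j)‖ ^ 2 ≤ K ^ 2 := by
  have h := sum_norm_sq_sum_mul_le hK {i} s fun j => conj (lam (i, j))
  simp only [Finset.sum_singleton, RCLike.mul_conj, RCLike.norm_conj] at h
  norm_cast at h
  rw [sq_abs] at h
  nlinarith [sq_nonneg K]

theorem memℓp_conj_row (hK : ∀ F : Finset Ξ, ‖finiteSection lam F‖ ≤ K) (i : Ξ) :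
    Memℓp (fun j => conj (lam (i, j))) 2 :=
  memℓp_two_of_forall_sum_sq_le fun s => by simpa using sum_norm_sq_row_le hK i s

theorem sum_norm_sq_le_of_hasSum (hK : ∀ F : Finset Ξ, ‖finiteSection lam F‖ ≤ K)
    {x : lp (fun _ : Ξ => 𝕜) 2} {b : Ξ → 𝕜}
    (hb : ∀ i, HasSum (fun j => lam (i, j) * x j) (b i)) (I : Finset Ξ) :
    ∑ i ∈ I, ‖b i‖ ^ 2 ≤ K ^ 2 * ‖x‖ ^ 2 := by
  have hlim : Filter.Tendsto (fun s => ∑ i ∈ I, ‖∑ j ∈ s, lam (i, j) * x j‖ ^ 2)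
      Filter.atTop (nhds (∑ i ∈ I, ‖b i‖ ^ 2)) :=
    tendsto_finsetSum _ fun i _ => ((hb i).norm).pow 2
  refine le_of_tendsto' hlim fun s => ?_
  calc _ ≤ K ^ 2 * ∑ j ∈ s, ‖x j‖ ^ 2 := sum_norm_sq_sum_mul_le hK I s x
    _ ≤ K ^ 2 * ‖x‖ ^ 2 := by gcongr; exact lp.sum_norm_sq_le_norm_sq x s

theorem exists_opNorm_le_of_norm_finiteSection_le
    (hK : ∀ F : Finset Ξ, ‖finiteSection lam F‖ ≤ K) :
    ∃ T : lp (fun _ : Ξ => 𝕜) 2 →L[𝕜] lp (fun _ : Ξ => 𝕜) 2, ‖T‖ ≤ K ∧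
      ∀ i j, ⟪lp.single 2 i (1 : 𝕜), T (lp.single 2 j (1 : 𝕜))⟫_𝕜 = lam (i, j) := by
  have hK0 : 0 ≤ K := (norm_nonneg _).trans (hK ∅)
  let row (i : Ξ) : lp (fun _ : Ξ => 𝕜) 2 := ⟨_, memℓp_conj_row hK i⟩
  have hrow (i : Ξ) (x : lp (fun _ : Ξ => 𝕜) 2) :
      HasSum (fun j => lam (i, j) * x j) (innerSL 𝕜 (row i) x) := by
    rw [innerSL_apply_apply]
    convert lp.hasSum_inner (row i) x using 1
    funext j
    change lam (i, j) * x j = ⟪conj (lam (i, j)), x j⟫_𝕜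
    rw [RCLike.inner_apply, RCLike.conj_conj, mul_comm]
  refine ⟨lp.mkCLM (fun i => innerSL 𝕜 (row i)) K hK0 (fun x s => ?_), lp.norm_mkCLM_le .., ?_⟩
  · rw [mul_pow]
    exact sum_norm_sq_le_of_hasSum hK (hrow · x) s
  · intro i j
    rw [lp.inner_single_one_left, lp.mkCLM_apply, innerSL_apply_apply, lp.inner_single_right]
    change ⟪conj (lam (i, j)), (1 : 𝕜)⟫_𝕜 = lam (i, j)
    rw [RCLike.inner_apply, RCLike.conj_conj, one_mul]

end Forward

end FiniteSections

theorem stmt_16_general {Ξ : Type*} [DecidableEq Ξ] (lam : Ξ × Ξ → ℂ) (K : ℝ) :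
    (∀ F : Finset Ξ,
      ‖Matrix.toEuclideanCLM (𝕜 := ℂ) (n := F)
        (Matrix.of fun i j : F => lam ((i : Ξ), (j : Ξ)))‖ ≤ K) ↔
    (∃ T : lp (fun _ : Ξ => ℂ) 2 →L[ℂ] lp (fun _ : Ξ => ℂ) 2, ‖T‖ ≤ K ∧
      ∀ i j : Ξ, ⟪lp.single 2 i (1 : ℂ), T (lp.single 2 j (1 : ℂ))⟫_ℂ = lam (i, j)) := by
  refine ⟨exists_opNorm_le_of_norm_finiteSection_le, ?_⟩
  rintro ⟨T, hT, hlam⟩ F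
  obtain rfl : (fun p : Ξ × Ξ => ⟪lp.single 2 p.1 (1 : ℂ), T (lp.single 2 p.2 1)⟫_ℂ) = lam :=
    funext fun p => hlam p.1 p.2
  exact (norm_finiteSection_le_opNorm T F).trans hT

/-- Let `Ξ` be an infinite index set and `λ : Ξ × Ξ → ℂ`. For `K ∈ ℝ`, the
following are equivalent: (i) every finite submatrix `(λ (i, j))_{i,j ∈ F}` (`F ⊆ Ξ` finite),
viewed as an operator on the finite-dimensional Hilbert space `ℂ^F`, has operator norm at most
`K`; (ii) there is a bounded linear operator `T` on `ℓ²(Ξ)` with `‖T‖ ≤ K` whose matrix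
entries are `λ`, i.e. `⟪e i, T (e j)⟫ = λ (i, j)` for the standard orthonormal basis
`(e i) = (lp.single 2 i 1)` of `ℓ²(Ξ)`. -/
theorem stmt_16 {Ξ : Type*} [Infinite Ξ] [DecidableEq Ξ] (lam : Ξ × Ξ → ℂ) (K : ℝ) :
    (∀ F : Finset Ξ,
      ‖Matrix.toEuclideanCLM (𝕜 := ℂ) (n := F)
        (Matrix.of fun i j : F => lam ((i : Ξ), (j : Ξ)))‖ ≤ K) ↔
    (∃ T : lp (fun _ : Ξ => ℂ) 2 →L[ℂ] lp (fun _ : Ξ => ℂ) 2, ‖T‖ ≤ K ∧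
      ∀ i j : Ξ, ⟪lp.single 2 i (1 : ℂ), T (lp.single 2 j (1 : ℂ))⟫_ℂ = lam (i, j)) :=
  stmt_16_general lam K
end
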